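/- Let F be a field with at least 4 elements and let A be a matrix over F such that the matroid M(A) has branch-width a ≥ 1. Then the matroid M(d⁺(A)) has branch-width at most a + 1. -/

import Mathlib

/-- A branch-decomposition of a ground set `E`: a subcubic tree together with a
bijection from `E` to the leaves of the tree. -/
structure BranchDecomp (E : Type*) where
  V : Type
  [fV : Fintype V]
  G : SimpleGraph V
  [dA : DecidableRel G.Adj]
  isTree : G.IsTree
  subcubic : ∀ v : V, G.degree v = 1 ∨ G.degree v = 3
  L : E ≃ {v : V // G.degree v = 1}

attribute [instance] BranchDecomp.fV BranchDecomp.dA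

/-- The side of the edge `{u,v}` containing `u`: those elements of `E` whose leaf is
reachable from `u` after deleting the edge. -/
def BranchDecomp.side {E : Type*} (D : BranchDecomp E) (u v : D.V) : Set E :=
  {x : E | (D.G.deleteEdges {s(u, v)}).Reachable u (D.L x).1}

/-- The width of a branch-decomposition with respect to a set function `lam`. -/
noncomputable def BranchDecomp.width {E : Type*} (D : BranchDecomp E)
    (lam : Set E → ℕ) : ℕ :=
  Finset.sup (Finset.univ.filter fun p : D.V × D.V => D.G.Adj p.1 p.2)
    (fun p => lam (D.side p.1 p.2))

/-- The branch-width of a set function `lam : Set E → ℕ`. -/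
noncomputable def branchWidth {E : Type*} (lam : Set E → ℕ) : ℕ :=
  if Nat.card E ≤ 1 then 0
  else sInf {w | ∃ D : BranchDecomp E, D.width lam = w}

/-- The path-width of a set function `lam : Set E → ℕ` : the minimum over linear layouts
of the maximum of `lam` on proper prefixes. -/
noncomputable def pathWidth (E : Type*) [Fintype E] (lam : Set E → ℕ) : ℕ :=
  if Fintype.card E ≤ 1 then 0
  else sInf {w | ∃ f : Fin (Fintype.card E) ≃ E,
    (Finset.sup (Finset.univ.filter fun i : Fin (Fintype.card E) =>
        (i : ℕ) < Fintype.card E - 1)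
      (fun i => lam {x | f.symm x ≤ i})) = w}

/-- `lam` is a connectivity function: symmetric, submodular, zero on the empty set. -/
structure IsConnFn {E : Type*} (lam : Set E → ℕ) : Prop where
  symm : ∀ X, lam X = lam Xᶜ
  submod : ∀ X Y, lam (X ∩ Y) + lam (X ∪ Y) ≤ lam X + lam Y
  empty : lam ∅ = 0

/-- The rank of the set `X` of columns of the matrix `A`. -/
noncomputable def colRank {m E F : Type*} [Fintype m] [Field F]
    (A : Matrix m E F) (X : Set E) : ℕ :=
  Module.finrank F (Submodule.span F (Matrix.transpose A '' X))

/-- The connectivity function of the matroid represented by the columns of `A`. -/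
noncomputable def matLam {m E F : Type*} [Fintype m] [Field F]
    (A : Matrix m E F) (X : Set E) : ℕ :=
  colRank A X + colRank A Xᶜ - colRank A Set.univ

/-- The branch-width of the matroid represented by the columns of `A`. -/
noncomputable def matBW {m E F : Type*} [Fintype m] [Field F]
    (A : Matrix m E F) : ℕ :=
  branchWidth (matLam A)

/-- A matrix represents a simple matroid iff it has no zero column and no two
distinct columns are linearly dependent. -/
def SimpleRep {m n F : Type*} [Field F] (A : Matrix m n F) : Prop :=
  (∀ j, Matrix.transpose A j ≠ 0) ∧
    ∀ j j' : n, j ≠ j' → ∀ c : F, Matrix.transpose A j ≠ c • Matrix.transpose A j'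

open scoped Classical in
/-- The cut-rank of a set `X` for a square matrix `A`: the rank of the submatrix with
rows in `X` and columns in the complement of `X`. -/
noncomputable def cutRank {E F : Type*} [Fintype E] [Field F]
    (A : Matrix E E F) (X : Set E) : ℕ :=
  (A.submatrix (fun x : X => (x : E)) (fun y : ↥Xᶜ => (y : E))).rank

/-- `d⁺(A)`: four side-by-side copies of `A` with one extra row taking the values
`α`, `β`, `γ`, `δ` on the four respective blocks of columns. -/
def dPlus {m n F : Type*} (α β γ δ : F) (A : Matrix m n F) :
    Matrix (Option m) (Fin 4 × n) F :=
  fun i p => Option.elim i (![α, β, γ, δ] p.1) (fun i' => A i' p.2)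

/-!
Take a branch-decomposition of `M(A)` of width `a` and give every leaf two new children, twice;
the leaf `x` then carries the four copies `(k, x)` of the column `x`. Deleting the new row of
`d⁺(A)` is a linear map whose kernel is the line of the new unit vector, so every set of columns
loses at most one in rank, and since `α ≠ β` the set of all columns loses exactly one. Hence an old
edge with side `S` has width at most `λ_A(S) + 1 ≤ a + 1`, while every new edge separates copies of
a single column, which span a space of dimension at most `2 ≤ a + 1`.
-/

open Module Submodule

theorem Submodule.finrank_eq_finrank_map_add_finrank_inf_ker {K V V₂ : Type*} [Field K]
    [AddCommGroup V] [Module K V] [AddCommGroup V₂] [Module K V₂] [FiniteDimensional K V]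
    (W : Submodule K V) (f : V →ₗ[K] V₂) :
    finrank K W = finrank K (W.map f) + finrank K ↥(W ⊓ LinearMap.ker f) := by
  rw [← (f.domRestrict W).finrank_range_add_finrank_ker, LinearMap.range_domRestrict,
    LinearMap.ker_domRestrict, ← finrank_map_subtype_eq, map_comap_subtype]

section ColRank

variable {m E F : Type*} [Fintype m] [Field F]

theorem colRank_eq_finrank_span_col (A : Matrix m E F) (X : Set E) :
    colRank A X = finrank F (span F (A.col '' X)) := rfl

theorem colRank_mono (A : Matrix m E F) {S T : Set E} (h : S ⊆ T) :
    colRank A S ≤ colRank A T :=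
  Submodule.finrank_mono (span_mono (Set.image_mono (f := A.col) h))

theorem colRank_singleton_le_one (A : Matrix m E F) (x : E) : colRank A {x} ≤ 1 := by
  rw [colRank_eq_finrank_span_col, Set.image_singleton]
  exact (finrank_span_le_card {A.col x}).trans (by simp)

theorem colRank_univ_le_add_compl (A : Matrix m E F) (S : Set E) :
    colRank A Set.univ ≤ colRank A S + colRank A Sᶜ := by
  simp only [colRank_eq_finrank_span_col]
  calc finrank F (span F (A.col '' Set.univ))
      = finrank F ↥(span F (A.col '' S) ⊔ span F (A.col '' Sᶜ)) := by
        rw [← span_union, ← Set.image_union, Set.union_compl_self]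
    _ ≤ _ := finrank_add_le_finrank_add_finrank _ _

theorem matLam_compl (A : Matrix m E F) (X : Set E) : matLam A Xᶜ = matLam A X := by
  rw [matLam, matLam, compl_compl, Nat.add_comm]

theorem matLam_le_colRank (A : Matrix m E F) (X : Set E) : matLam A X ≤ colRank A X := by
  have := colRank_mono A (Set.subset_univ Xᶜ)
  unfold matLam
  omega

end ColRank

theorem ker_funLeft_some {m F : Type*} [Field F] [DecidableEq m] :
    LinearMap.ker (LinearMap.funLeft F F (some : m → Option m)) = F ∙ Pi.single none 1 := by
  ext v
  rw [LinearMap.mem_ker, mem_span_singleton]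
  constructor
  · intro hv
    refine ⟨v none, funext fun o => ?_⟩
    cases o with
    | none => simp
    | some i => simpa using (congrFun hv i).symm
  · rintro ⟨c, rfl⟩
    ext i
    simp [LinearMap.funLeft_apply]

theorem map_funLeft_some_span_dPlus {m n F : Type*} [Field F] (α β γ δ : F) (A : Matrix m n F)
    (X : Set (Fin 4 × n)) :
    (span F ((dPlus α β γ δ A).col '' X)).map (LinearMap.funLeft F F some) =
      span F (A.col '' (Prod.snd '' X)) := by
  rw [map_span, Set.image_image, Set.image_image]
  rfl

section DPlus

variable {m n F : Type*} [Fintype m] [Field F] (α β γ δ : F) (A : Matrix m n F)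

theorem colRank_dPlus_le (X : Set (Fin 4 × n)) :
    colRank (dPlus α β γ δ A) X ≤ colRank A (Prod.snd '' X) + 1 := by
  classical
  have hker : finrank F ↥(LinearMap.ker (LinearMap.funLeft F F (some : m → Option m))) = 1 := by
    rw [ker_funLeft_some]
    exact finrank_span_singleton (by simp)
  rw [colRank_eq_finrank_span_col, finrank_eq_finrank_map_add_finrank_inf_ker _
    (LinearMap.funLeft F F some), map_funLeft_some_span_dPlus, ← hker]
  exact Nat.add_le_add_left (Submodule.finrank_mono inf_le_right) _

theorem colRank_dPlus_univ (hαβ : α ≠ β) [Nonempty n] :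
    colRank (dPlus α β γ δ A) Set.univ = colRank A Set.univ + 1 := by
  classical
  set W := span F ((dPlus α β γ δ A).col '' Set.univ)
  obtain ⟨x⟩ := ‹Nonempty n›
  have hcol (k : Fin 4) : (dPlus α β γ δ A).col (k, x) ∈ W :=
    subset_span ⟨(k, x), trivial, rfl⟩
  have hdiff : (dPlus α β γ δ A).col (0, x) - (dPlus α β γ δ A).col (1, x) =
      (α - β) • Pi.single none 1 := by
    ext o; cases o <;> simp [dPlus, Matrix.col]
  have hsingle : (Pi.single none 1 : Option m → F) ∈ W := by
    have := W.smul_mem (α - β)⁻¹ (sub_mem (hcol 0) (hcol 1))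
    rwa [hdiff, smul_smul, inv_mul_cancel₀ (sub_ne_zero.mpr hαβ), one_smul] at this
  have hker : W ⊓ LinearMap.ker (LinearMap.funLeft F F some) = F ∙ Pi.single none 1 := by
    rw [ker_funLeft_some, inf_eq_right, span_singleton_le_iff_mem]
    exact hsingle
  rw [colRank_eq_finrank_span_col, finrank_eq_finrank_map_add_finrank_inf_ker _
    (LinearMap.funLeft F F some), map_funLeft_some_span_dPlus, hker,
    finrank_span_singleton (by simp), Set.image_univ, Prod.range_snd]
  rfl

theorem matLam_dPlus_preimage_snd_le (hαβ : α ≠ β) [Nonempty n] (S : Set n) :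
    matLam (dPlus α β γ δ A) (Prod.snd ⁻¹' S) ≤ matLam A S + 1 := by
  have h₁ := colRank_dPlus_le α β γ δ A (Prod.snd ⁻¹' S)
  have h₂ := colRank_dPlus_le α β γ δ A (Prod.snd ⁻¹' Sᶜ)
  rw [Set.image_preimage_eq _ Prod.snd_surjective] at h₁ h₂
  have := colRank_dPlus_univ α β γ δ A hαβ
  have := colRank_univ_le_add_compl A S
  rw [matLam, matLam, ← Set.preimage_compl]
  omega

theorem matLam_dPlus_le_two {X : Set (Fin 4 × n)} {x : n} (hX : X ⊆ Prod.snd ⁻¹' {x}) :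
    matLam (dPlus α β γ δ A) X ≤ 2 :=
  calc matLam (dPlus α β γ δ A) X
      ≤ colRank A (Prod.snd '' X) + 1 :=
        (matLam_le_colRank _ X).trans (colRank_dPlus_le α β γ δ A X)
    _ ≤ colRank A {x} + 1 := by
        gcongr; exact colRank_mono A (Set.image_subset_iff.mpr hX)
    _ ≤ 2 := by have := colRank_singleton_le_one A x; omega

end DPlus

open SimpleGraph

theorem SimpleGraph.Reachable.mem_of_adj_closed {V : Type*} {G : SimpleGraph V} {P : Set V}
    (hP : ∀ ⦃a b⦄, G.Adj a b → a ∈ P → b ∈ P) {u v : V} (h : G.Reachable u v) (hu : u ∈ P) :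
    v ∈ P := by
  obtain ⟨p⟩ := h
  induction p with
  | nil => exact hu
  | cons hadj _ ih => exact ih (hP hadj hu)

theorem SimpleGraph.Reachable.deleteEdges_reachable_or {V : Type*} {G : SimpleGraph V} {u v w : V}
    (huv : G.Adj u v) (h : G.Reachable u w) :
    (G.deleteEdges {s(u, v)}).Reachable u w ∨ (G.deleteEdges {s(u, v)}).Reachable v w := by
  refine h.mem_of_adj_closed (P := {w | _ ∨ _}) (fun a b hab ha => ?_) (Or.inl .rfl)
  by_cases he : s(a, b) = s(u, v)
  · rcases Sym2.eq_iff.mp he with ⟨rfl, rfl⟩ | ⟨rfl, rfl⟩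
    exacts [Or.inr .rfl, Or.inl .rfl]
  · have hab' : (G.deleteEdges {s(u, v)}).Adj a b := by simp [hab, he]
    exact ha.imp (·.trans hab'.reachable) (·.trans hab'.reachable)

namespace BranchDecomp

variable {E : Type*} (D : BranchDecomp E)

theorem side_swap {u v : D.V} (huv : D.G.Adj u v) : D.side v u = (D.side u v)ᶜ := by
  ext x
  have hbridge : ¬ (D.G.deleteEdges {s(u, v)}).Reachable u v :=
    isAcyclic_iff_forall_adj_isBridge.mp D.isTree.isAcyclic huv
  simp only [side, Set.mem_ofPred_eq, Set.mem_compl_iff, Sym2.eq_swap (a := v)]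
  refine ⟨fun hv hu => hbridge (hu.trans hv.symm), fun hu => ?_⟩
  exact ((D.isTree.connected.preconnected u _).deleteEdges_reachable_or huv).resolve_left hu

theorem width_le_iff {lam : Set E → ℕ} {w : ℕ} :
    D.width lam ≤ w ↔ ∀ ⦃u v⦄, D.G.Adj u v → lam (D.side u v) ≤ w := by
  simp [width, Finset.sup_le_iff]

theorem le_width (lam : Set E → ℕ) {u v : D.V} (huv : D.G.Adj u v) :
    lam (D.side u v) ≤ D.width lam :=
  D.width_le_iff.mp le_rfl huv

def comap {E' : Type*} (σ : E' ≃ E) : BranchDecomp E' where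
  V := D.V
  G := D.G
  isTree := D.isTree
  subcubic := D.subcubic
  L := σ.trans D.L

theorem width_comap {E' : Type*} (σ : E' ≃ E) (lam : Set E' → ℕ) :
    (D.comap σ).width lam = D.width (fun S => lam (σ ⁻¹' S)) := rfl

/-- `inl a` is a vertex of `D`, `inr (x, c)` is the `c`-th of two new children of the leaf `x`. -/
abbrev SplitVertex := D.V ⊕ ({v : D.V // D.G.degree v = 1} × Fin 2)

def splitAdj : D.SplitVertex → D.SplitVertex → Prop
  | .inl a, .inl b => D.G.Adj a b
  | .inl a, .inr y => y.1.1 = a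
  | .inr y, .inl a => y.1.1 = a
  | .inr _, .inr _ => False

def splitGraph : SimpleGraph D.SplitVertex where
  Adj := D.splitAdj
  symm := by
    refine ⟨?_⟩
    rintro (a | y) (b | z) h <;> simp only [splitAdj] at h ⊢
    exacts [h.symm, h, h]
  loopless := by
    refine ⟨?_⟩
    rintro (a | y) h <;> simp only [splitAdj] at h
    exact D.G.loopless.irrefl a h

@[simp] theorem splitGraph_adj_inl_inl {a b : D.V} :
    D.splitGraph.Adj (.inl a) (.inl b) ↔ D.G.Adj a b := .rfl

@[simp] theorem splitGraph_adj_inl_inr {a : D.V} {y} :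
    D.splitGraph.Adj (.inl a) (.inr y) ↔ y.1.1 = a := .rfl

@[simp] theorem splitGraph_adj_inr_inl {a : D.V} {y} :
    D.splitGraph.Adj (.inr y) (.inl a) ↔ y.1.1 = a := .rfl

@[simp] theorem splitGraph_not_adj_inr_inr {y z} : ¬ D.splitGraph.Adj (.inr y) (.inr z) := id

noncomputable instance : DecidableRel D.splitGraph.Adj := Classical.decRel _

theorem splitGraph_degree_inr (y) : D.splitGraph.degree (.inr y) = 1 := by
  classical
  rw [← card_neighborFinset_eq_degree, Finset.card_eq_one]
  refine ⟨.inl y.1.1, Finset.ext ?_⟩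
  rintro (b | z) <;> simp [eq_comm]

theorem splitGraph_degree_inl (a : D.V) : D.splitGraph.degree (.inl a) = 3 := by
  classical
  have hnbr : D.splitGraph.neighborFinset (.inl a) =
      (D.G.neighborFinset a).disjSum {y | y.1.1 = a} := by
    ext (b | y) <;> simp
  rw [← card_neighborFinset_eq_degree, hnbr, Finset.card_disjSum, card_neighborFinset_eq_degree]
  rcases D.subcubic a with ha | ha
  · have : ({y | y.1.1 = a} : Finset ({v : D.V // D.G.degree v = 1} × Fin 2)) =
        {⟨a, ha⟩} ×ˢ Finset.univ := by
      ext ⟨x, c⟩; simp [Subtype.ext_iff, eq_comm]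
    simp [this, ha]
  · have : ({y | y.1.1 = a} : Finset ({v : D.V // D.G.degree v = 1} × Fin 2)) = ∅ := by
      ext ⟨x, c⟩
      simp only [Finset.mem_filter, Finset.mem_univ, true_and, Finset.notMem_empty, iff_false]
      rintro rfl
      omega
    simp [this, ha]

def splitLeaf (p : E × Fin 2) : {w // D.splitGraph.degree w = 1} :=
  ⟨.inr (D.L p.1, p.2), D.splitGraph_degree_inr _⟩

theorem splitLeaf_bijective : Function.Bijective D.splitLeaf := by
  refine ⟨fun p q h => ?_, ?_⟩
  · simp only [splitLeaf, Subtype.mk.injEq, Sum.inr.injEq, Prod.mk.injEq, D.L.apply_eq_iff_eq] at h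
    exact Prod.ext h.1 h.2
  · rintro ⟨a | ⟨x, c⟩, hw⟩
    · simp [splitGraph_degree_inl] at hw
    · exact ⟨(D.L.symm x, c), by simp [splitLeaf]⟩

theorem splitGraph_connected : D.splitGraph.Connected := by
  have hne : Nonempty D.V := D.isTree.connected.nonempty
  let inlHom : D.G →g D.splitGraph := ⟨Sum.inl, id⟩
  have hbase (w : D.SplitVertex) : ∃ a, D.splitGraph.Reachable (.inl a) w := by
    rcases w with a | y
    exacts [⟨a, .rfl⟩, ⟨y.1.1, Adj.reachable (by simp)⟩]
  refine (connected_iff _).mpr ⟨fun u w => ?_, ⟨.inl hne.some⟩⟩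
  obtain ⟨a, ha⟩ := hbase u
  obtain ⟨b, hb⟩ := hbase w
  exact ha.symm.trans (((D.isTree.connected.preconnected a b).map inlHom).trans hb)

def splitBase : D.SplitVertex → D.V := Sum.elim id (fun y => y.1.1)

theorem splitGraph_deleteEdges_reachable_inl_iff (a b : D.V) (w : D.SplitVertex) :
    (D.splitGraph.deleteEdges {s(.inl a, .inl b)}).Reachable (.inl a) w ↔
      (D.G.deleteEdges {s(a, b)}).Reachable a (D.splitBase w) := by
  constructor
  · intro h
    refine h.mem_of_adj_closed
      (P := {w | (D.G.deleteEdges {s(a, b)}).Reachable a (D.splitBase w)})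
      (fun u v huv hu => ?_) Reachable.rfl
    obtain ⟨huv, hne⟩ := deleteEdges_adj.mp huv
    rcases u with c | y <;> rcases v with d | z
    · refine Reachable.trans hu (Adj.reachable (deleteEdges_adj.mpr ⟨huv, fun hcd => hne ?_⟩))
      rcases Sym2.eq_iff.mp hcd with ⟨rfl, rfl⟩ | ⟨rfl, rfl⟩
      exacts [rfl, Sym2.eq_swap]
    · obtain rfl : z.1.1 = c := huv
      exact hu
    · obtain rfl : y.1.1 = d := huv
      exact hu
    · exact (D.splitGraph_not_adj_inr_inr huv).elim
  · intro h
    let inlHom : D.G.deleteEdges {s(a, b)} →g D.splitGraph.deleteEdges {s(.inl a, .inl b)} :=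
      ⟨Sum.inl, fun {c d} hcd => by simpa using hcd⟩
    have hbase : (D.splitGraph.deleteEdges {s(.inl a, .inl b)}).Reachable
        (.inl (D.splitBase w)) w := by
      rcases w with c | y
      · exact .rfl
      · exact Adj.reachable (by simp [splitBase])
    exact (h.map inlHom).trans hbase

theorem splitGraph_deleteEdges_reachable_inr_iff (y : {v : D.V // D.G.degree v = 1} × Fin 2)
    (w : D.SplitVertex) :
    (D.splitGraph.deleteEdges {s(.inr y, .inl y.1.1)}).Reachable (.inr y) w ↔ w = .inr y := by
  refine ⟨fun h => h.mem_of_adj_closed (P := {.inr y}) (fun u v huv hu => ?_) rfl,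
    by rintro rfl; exact .rfl⟩
  rw [Set.mem_singleton_iff] at hu
  subst hu
  rcases v with d | z
  · simp only [deleteEdges_adj, splitGraph_adj_inr_inl, Set.mem_singleton_iff] at huv
    exact (huv.2 (by rw [huv.1])).elim
  · exact (D.splitGraph_not_adj_inr_inr huv.1).elim

theorem splitGraph_isAcyclic : D.splitGraph.IsAcyclic := by
  refine isAcyclic_iff_forall_adj_isBridge.mpr ?_
  rintro (a | y) (b | z) hadj
  · rw [isBridge_iff, splitGraph_deleteEdges_reachable_inl_iff]
    exact isAcyclic_iff_forall_adj_isBridge.mp D.isTree.isAcyclic hadj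
  · obtain rfl : z.1.1 = a := hadj
    rw [Sym2.eq_swap, isBridge_iff, splitGraph_deleteEdges_reachable_inr_iff]
    exact Sum.inl_ne_inr
  · obtain rfl : y.1.1 = b := hadj
    rw [isBridge_iff, splitGraph_deleteEdges_reachable_inr_iff]
    exact Sum.inl_ne_inr
  · exact (D.splitGraph_not_adj_inr_inr hadj).elim

noncomputable def splitLeaves : BranchDecomp (E × Fin 2) where
  V := D.SplitVertex
  G := D.splitGraph
  isTree := ⟨D.splitGraph_connected, D.splitGraph_isAcyclic⟩
  subcubic := by
    rintro (a | y)
    exacts [.inr (D.splitGraph_degree_inl a), .inl (D.splitGraph_degree_inr y)]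
  L := Equiv.ofBijective D.splitLeaf D.splitLeaf_bijective

theorem splitLeaves_side_inl (a b : D.V) :
    D.splitLeaves.side (.inl a) (.inl b) = Prod.fst ⁻¹' D.side a b := by
  ext p
  exact D.splitGraph_deleteEdges_reachable_inl_iff a b _

theorem splitLeaves_side_inr (y : {v : D.V // D.G.degree v = 1} × Fin 2) :
    D.splitLeaves.side (.inr y) (.inl y.1.1) = {(D.L.symm y.1, y.2)} := by
  ext ⟨e, c⟩
  refine (D.splitGraph_deleteEdges_reachable_inr_iff y (.inr (D.L e, c))).trans ?_
  simp only [Set.mem_singleton_iff, Sum.inr.injEq, Prod.ext_iff, D.L.eq_symm_apply]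

theorem width_splitLeaves_le {lam : Set (E × Fin 2) → ℕ} (hsymm : ∀ X, lam X = lam Xᶜ) {w : ℕ}
    (hD : D.width (fun S => lam (Prod.fst ⁻¹' S)) ≤ w) (hsingle : ∀ p, lam {p} ≤ w) :
    D.splitLeaves.width lam ≤ w := by
  rw [width_le_iff] at hD ⊢
  rintro (a | y) (b | z) hadj
  · rw [splitLeaves_side_inl]
    exact hD hadj
  · rw [side_swap _ hadj.symm]
    obtain rfl : z.1.1 = a := hadj
    rw [splitLeaves_side_inr, ← hsymm]
    exact hsingle _
  · obtain rfl : y.1.1 = b := hadj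
    rw [splitLeaves_side_inr]
    exact hsingle _
  · exact (D.splitGraph_not_adj_inr_inr hadj).elim

end BranchDecomp

theorem branchWidth_le_width {E : Type*} (lam : Set E → ℕ) (D : BranchDecomp E) :
    branchWidth lam ≤ D.width lam := by
  unfold branchWidth
  split_ifs
  exacts [Nat.zero_le _, Nat.sInf_le ⟨D, rfl⟩]

theorem exists_width_eq_branchWidth {E : Type*} {lam : Set E → ℕ} (h : branchWidth lam ≠ 0) :
    ∃ D : BranchDecomp E, D.width lam = branchWidth lam := by
  unfold branchWidth at h ⊢
  split_ifs at h ⊢ with hcard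
  · exact absurd rfl h
  · refine Nat.sInf_mem (s := {w | ∃ D : BranchDecomp E, D.width lam = w})
      (Set.nonempty_iff_ne_empty.mpr fun hempty => h ?_)
    rw [hempty, Nat.sInf_empty]

theorem nonempty_of_branchWidth_ne_zero {E : Type*} {lam : Set E → ℕ} (h : branchWidth lam ≠ 0) :
    Nonempty E := by
  unfold branchWidth at h
  split_ifs at h with hcard
  · exact absurd rfl h
  · exact (Nat.card_pos_iff.mp (by omega)).1

/-- `(k, x) ↦ ((x, k / 2), k % 2)`: the four copies of the column `x` become the leaves below the
leaf `x` after splitting twice. -/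
def finFourProdEquiv (n : Type*) : Fin 4 × n ≃ (n × Fin 2) × Fin 2 :=
  (Equiv.prodComm (Fin 4) n).trans
    ((Equiv.prodCongr (Equiv.refl n) finProdFinEquiv.symm).trans
      (Equiv.prodAssoc n (Fin 2) (Fin 2)).symm)

theorem finFourProdEquiv_fst_fst {n : Type*} (p : Fin 4 × n) :
    (finFourProdEquiv n p).1.1 = p.2 := rfl

theorem stmt19 {m n F : Type*} [Fintype m] [Field F]
    (α β γ δ : F) (hd : [α, β, γ, δ].Pairwise (· ≠ ·))
    (A : Matrix m n F) (a : ℕ) (ha : 1 ≤ a) (hbw : matBW A = a) :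
    matBW (dPlus α β γ δ A) ≤ a + 1 := by
  have hαβ : α ≠ β := (List.pairwise_cons.mp hd).1 β (by simp)
  have hbw₀ : matBW A ≠ 0 := by omega
  have := nonempty_of_branchWidth_ne_zero hbw₀
  obtain ⟨D, hD⟩ := exists_width_eq_branchWidth hbw₀
  let μ (X : Set ((n × Fin 2) × Fin 2)) := matLam (dPlus α β γ δ A) (finFourProdEquiv n ⁻¹' X)
  have hsymm (X) : μ X = μ Xᶜ := by simp only [μ, Set.preimage_compl, matLam_compl]
  have hfibre (X) (x : n) (hX : X ⊆ (fun q => q.1.1) ⁻¹' {x}) : μ X ≤ a + 1 :=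
    (matLam_dPlus_le_two α β γ δ A fun p hp => hX hp).trans (by omega)
  have hold : D.width (fun S => μ (Prod.fst ⁻¹' (Prod.fst ⁻¹' S))) ≤ a + 1 := by
    refine D.width_le_iff.mpr fun u v huv => ?_
    have hside := D.le_width (matLam A) huv
    have hpre : finFourProdEquiv n ⁻¹' (Prod.fst ⁻¹' (Prod.fst ⁻¹' D.side u v)) =
        Prod.snd ⁻¹' D.side u v := by ext p; simp [finFourProdEquiv_fst_fst]
    simp only [μ, hpre]
    exact (matLam_dPlus_preimage_snd_le α β γ δ A hαβ _).trans (by unfold matBW at hbw; omega)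
  calc matBW (dPlus α β γ δ A)
      ≤ (D.splitLeaves.splitLeaves.comap (finFourProdEquiv n)).width (matLam (dPlus α β γ δ A)) :=
        branchWidth_le_width _ _
    _ = D.splitLeaves.splitLeaves.width μ := D.splitLeaves.splitLeaves.width_comap _ _
    _ ≤ a + 1 := by
        refine D.splitLeaves.width_splitLeaves_le hsymm ?_
          fun q => hfibre _ q.1.1 (Set.singleton_subset_iff.mpr rfl)
        refine D.width_splitLeaves_le (fun X => by rw [hsymm, Set.preimage_compl]) hold
          fun p => hfibre _ p.1 fun q (hq : q.1 = p) => congrArg Prod.fst hq
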